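/- Let R be a ring, Σ a set of injective maps between finitely generated projective right R-modules, and M a finitely presented R-module of projective dimension at most 1. Then Hom_R(M, X) = 0 and Ext¹_R(M, X) = 0 for every R_Σ-module X if and only if M ⊗_R R_Σ = 0 and Tor₁^R(M, R_Σ) = 0. -/

import Mathlib

/-!
A presentation `0 → P → Q → M → 0` by projectives is a projective resolution of `M` of length
one. Computing with it, `Hom(M, Y) = 0` and `Ext¹(M, Y) = 0` say together that precomposition
with `i : P → Q` is a bijection `Hom(Q, Y) → Hom(P, Y)`, while `F M = 0` and `L₁F M = 0` say
that `F i` is epi and mono. For `Y = G X` with `F ⊣ G`, the adjunction turns precomposition with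
`i` into precomposition with `F i` on `Hom(F Q, X) → Hom(F P, X)`, and by Yoneda this is
bijective for every `X` exactly when `F i` is an isomorphism.
-/

open CategoryTheory CategoryTheory.Limits

universe u

variable {R : Type u} [Ring R]

/-- A ring homomorphism `f : R →+* S` inverts a map `α : P ⟶ Q` of right `R`-modules if
`α ⊗_R S` is an isomorphism; equivalently, for every `S`-module `X` (viewed as an
`R`-module via `f`), composition with `α` gives a bijection `Hom_R(Q, X) → Hom_R(P, X)`. -/
def RingHom.Inverts {S : Type u} [Ring S] (f : R →+* S)
    {P Q : ModuleCat.{u} R} (α : P ⟶ Q) : Prop :=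
  ∀ (X : Type u) [AddCommGroup X] [Module S X],
    letI : Module R X := Module.compHom X f
    Function.Bijective (fun g : ↥Q →ₗ[R] X => g.comp (α.hom : ↥P →ₗ[R] ↥Q))

/-- `f : R →+* S` is the universal localization of `R` at a set `Sig` of maps between
finitely generated projective right `R`-modules. -/
structure IsUniversalLocalization {S : Type u} [Ring S] (f : R →+* S)
    (Sig : CategoryTheory.MorphismProperty (ModuleCat.{u} R)) : Prop where
  inverts : ∀ ⦃P Q : ModuleCat.{u} R⦄ (α : P ⟶ Q), Sig α → f.Inverts α
  universal : ∀ (T : Type u) (_ : Ring T) (g : R →+* T),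
    (∀ ⦃P Q : ModuleCat.{u} R⦄ (α : P ⟶ Q), Sig α → g.Inverts α) →
    ∃! h : S →+* T, h.comp f = g

lemma CategoryTheory.Adjunction.isIso_map_iff_bijective_comp {C D : Type*} [Category C]
    [Category D] {F : C ⥤ D} {G : D ⥤ C} (adj : F ⊣ G) {P Q : C} (i : P ⟶ Q) :
    IsIso (F.map i) ↔ ∀ X : D, Function.Bijective (fun h : Q ⟶ G.obj X => i ≫ h) := by
  rw [isIso_iff_coyoneda_map_bijective]
  refine forall_congr' fun X => ?_
  have : (fun h : Q ⟶ G.obj X => i ≫ h) =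
      adj.homEquiv P X ∘ (fun u : F.obj Q ⟶ X => F.map i ≫ u) ∘ (adj.homEquiv Q X).symm := by
    funext h
    simp [adj.homEquiv_naturality_left]
  rw [this, Equiv.comp_bijective, Equiv.bijective_comp]

open ZeroObject

variable {C : Type*} [Category C] [Abelian C]

namespace ChainComplex

noncomputable def twoTerm {P Q : C} (i : P ⟶ Q) : ChainComplex C ℕ :=
  of (fun | 0 => Q | 1 => P | _ + 2 => 0) (fun | 0 => i | _ + 1 => 0)
    (fun | 0 => zero_comp | _ + 1 => zero_comp)

variable {P Q : C} (i : P ⟶ Q)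

lemma isZero_twoTerm_X (n : ℕ) : IsZero ((twoTerm i).X (n + 2)) := isZero_zero C

@[simp] lemma twoTerm_d_one_zero : (twoTerm i).d 1 0 = i := by
  simp only [twoTerm]
  exact of_d _ _ 0

lemma twoTerm_d_succ_succ (n : ℕ) : (twoTerm i).d (n + 2) (n + 1) = 0 :=
  (isZero_twoTerm_X i n).eq_of_src _ _

lemma twoTerm_exactAt_succ [Mono i] (n : ℕ) : (twoTerm i).ExactAt (n + 1) := by
  rw [HomologicalComplex.exactAt_iff' _ (n + 2) (n + 1) n (by simp) (by simp)]
  match n with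
  | 0 => exact (ShortComplex.exact_iff_mono _ (twoTerm_d_succ_succ i 0)).2 (by simpa)
  | n + 1 => exact ShortComplex.exact_of_isZero_X₂ _ (isZero_twoTerm_X i n)

end ChainComplex

namespace CategoryTheory.ShortComplex

variable {S : ShortComplex C}

lemma shortExact_of_cokernelIso {P Q M : C} (i : P ⟶ Q) [Mono i] (e : cokernel i ≅ M) :
    (ShortComplex.mk i (cokernel.π i ≫ e.hom) (by simp)).ShortExact :=
  shortExact_of_iso (S₁ := ShortComplex.mk i (cokernel.π i) (cokernel.condition i))
    (isoMk (Iso.refl _) (Iso.refl _) e (by simp) (by simp)) { exact := exact_cokernel i }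

lemma Exact.forall_eq_zero_iff_injective (hS : S.Exact) [Epi S.g] (Y : C) :
    (∀ g : S.X₃ ⟶ Y, g = 0) ↔ Function.Injective (fun h : S.X₂ ⟶ Y => S.f ≫ h) := by
  refine ⟨fun hY h₁ h₂ hh => ?_, fun hinj g => ?_⟩
  · obtain ⟨d, hd⟩ := CokernelCofork.IsColimit.desc' hS.gIsCokernel (h₁ - h₂)
      (by simp [Preadditive.comp_sub, hh])
    rw [← sub_eq_zero, ← hd, hY d, comp_zero]
  · rw [← cancel_epi S.g, comp_zero]
    exact hinj (by simp)

namespace ShortExact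

lemma isZero_map_X₃_iff_epi {D : Type*} [Category D] [Preadditive D] (hS : S.ShortExact)
    (F : C ⥤ D) [F.PreservesZeroMorphisms] [PreservesColimit (parallelPair S.f 0) F] :
    IsZero (F.obj S.X₃) ↔ Epi (F.map S.f) :=
  have := hS.epi_g
  (Preadditive.epi_iff_isZero_cokernel' _
    (CokernelCofork.mapIsColimit _ hS.exact.gIsCokernel F)).symm

variable [Projective S.X₁] [Projective S.X₂]

noncomputable def projectiveResolution (hS : S.ShortExact) : ProjectiveResolution S.X₃ where
  complex := ChainComplex.twoTerm S.f
  projective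
    | 0 => inferInstanceAs (Projective S.X₂)
    | 1 => inferInstanceAs (Projective S.X₁)
    | n + 2 => (ChainComplex.isZero_twoTerm_X S.f n).projective
  π := (ChainComplex.toSingle₀Equiv _ _).symm
    ⟨S.g, by rw [ChainComplex.twoTerm_d_one_zero]; exact S.zero⟩
  quasiIso := ⟨fun
    | 0 => by
      rw [ChainComplex.quasiIsoAt₀_iff, quasiIso_iff_of_zeros' _ rfl rfl rfl]
      refine (exact_and_epi_g_iff_of_iso ?_).2 ⟨hS.exact, hS.epi_g⟩
      exact isoMk (Iso.refl _) (Iso.refl _) (Iso.refl _)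
        (by simp; erw [Category.id_comp, Category.comp_id])
        (by simp; erw [Category.id_comp, Category.comp_id,
          ChainComplex.toSingle₀Equiv_symm_apply_f_zero])
    | n + 1 => by
      have := hS.mono_f
      rw [quasiIsoAt_iff_exactAt' _ _ (ChainComplex.exactAt_succ_single_obj _ _)]
      exact ChainComplex.twoTerm_exactAt_succ S.f n⟩

variable [EnoughProjectives C]

lemma isZero_leftDerived_one_iff {D : Type*} [Category D] [Abelian D] (hS : S.ShortExact)
    (F : C ⥤ D) [F.Additive] :
    IsZero ((F.leftDerived 1).obj S.X₃) ↔ Mono (F.map S.f) := by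
  rw [(hS.projectiveResolution.isoLeftDerivedObj F 1).isZero_iff]
  let K := (F.mapHomologicalComplex _).obj (ChainComplex.twoTerm S.f)
  have hK₂₁ : K.d 2 1 = 0 :=
    (congrArg F.map (ChainComplex.twoTerm_d_succ_succ S.f 0)).trans (F.map_zero _ _)
  have hK₁₀ : K.d 1 0 = F.map S.f := congrArg F.map (ChainComplex.twoTerm_d_one_zero S.f)
  change IsZero (K.homology 1) ↔ _
  rw [← HomologicalComplex.exactAt_iff_isZero_homology,
    HomologicalComplex.exactAt_iff' _ 2 1 0 (by simp) (by simp), exact_iff_mono _ hK₂₁]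
  exact hK₁₀ ▸ Iff.rfl

lemma isZero_ext_one_iff (hS : S.ShortExact) (k : Type*) [Ring k] [Linear k C] (Y : C) :
    IsZero (((Ext k C 1).obj (Opposite.op S.X₃)).obj Y) ↔
      Function.Surjective (fun h : S.X₂ ⟶ Y => S.f ≫ h) := by
  rw [(hS.projectiveResolution.isoExt 1 Y).isZero_iff]
  let K := (ChainComplex.twoTerm S.f).linearYonedaObj k Y
  have hK₂ : IsZero (K.X 2) := by
    have : Subsingleton (K.X 2) := ⟨(ChainComplex.isZero_twoTerm_X S.f 0).eq_of_src⟩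
    exact ModuleCat.isZero_of_subsingleton _
  have hK₀₁ (h : S.X₂ ⟶ Y) : (K.d 0 1).hom h = S.f ≫ h := by
    simp only [K, ChainComplex.linearYonedaObj_d, ChainComplex.twoTerm_d_one_zero]
    rfl
  change IsZero (K.homology 1) ↔ _
  rw [← HomologicalComplex.exactAt_iff_isZero_homology,
    HomologicalComplex.exactAt_iff' _ 0 1 2 (by simp) (by simp),
    exact_iff_epi _ (hK₂.eq_of_tgt _ _), ModuleCat.epi_iff_surjective]
  exact iff_of_eq (congrArg _ (funext hK₀₁))

end ShortExact

end CategoryTheory.ShortComplex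

open ShortComplex in
/-- `F` plays the role of `- ⊗_R R_Σ`, so `F.leftDerived 1` is `Tor₁^R(-, R_Σ)`. -/
theorem hom_ext_vanish_iff_tensor_tor_vanish_general
    {S : Type u} [Ring S] (f : R →+* S)
    (F : ModuleCat.{u} R ⥤ ModuleCat.{u} S) [F.Additive]
    (adj : F ⊣ ModuleCat.restrictScalars f)
    (M : ModuleCat.{u} R)
    (hpd : ∃ (P Q : ModuleCat.{u} R) (i : P ⟶ Q),
      Module.Finite R P ∧ Module.Projective R P ∧ Module.Finite R Q ∧
        Module.Projective R Q ∧ Function.Injective i ∧ Nonempty (cokernel i ≅ M)) :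
    ((∀ (X : ModuleCat.{u} S) (g : M ⟶ (ModuleCat.restrictScalars f).obj X), g = 0) ∧
      (∀ (X : ModuleCat.{u} S),
        IsZero (((Ext ℤ (ModuleCat.{u} R) 1).obj (Opposite.op M)).obj
          ((ModuleCat.restrictScalars f).obj X)))) ↔
    (IsZero (F.obj M) ∧ IsZero ((F.leftDerived 1).obj M)) := by
  obtain ⟨P, Q, i, -, hP, -, hQ, hi, ⟨e⟩⟩ := hpd
  have : Projective P := (IsProjective.iff_projective P).mp hP
  have : Projective Q := (IsProjective.iff_projective Q).mp hQ
  have : Mono i := (ModuleCat.mono_iff_injective i).2 hi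
  have : PreservesColimitsOfSize F := adj.leftAdjoint_preservesColimits
  have hS := shortExact_of_cokernelIso i e
  rw [← forall_and]
  simp only [hS.exact.forall_eq_zero_iff_injective, hS.isZero_ext_one_iff]
  change (∀ X, Function.Bijective fun h : Q ⟶ _ => i ≫ h) ↔ _
  rw [← adj.isIso_map_iff_bijective_comp, isIso_iff_mono_and_epi, and_comm,
    hS.isZero_map_X₃_iff_epi F, hS.isZero_leftDerived_one_iff F]

/-- Let `Sig` be a set of injective maps between finitely generated projective right
`R`-modules, `f : R →+* R_Σ` its universal localization, and let `F = - ⊗_R R_Σ` be the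
induction functor (the left adjoint to restriction of scalars), so that
`Tor_i^R(-, R_Σ)` is its `i`-th left derived functor.  Let `M` be a finitely presented
`R`-module of projective dimension at most 1.  Then `Hom_R(M, X) = 0` and
`Ext¹_R(M, X) = 0` for every `R_Σ`-module `X` if and only if
`M ⊗_R R_Σ = 0` and `Tor₁^R(M, R_Σ) = 0`. -/
theorem hom_ext_vanish_iff_tensor_tor_vanish
    {S : Type u} [Ring S] (f : R →+* S)
    (Sig : CategoryTheory.MorphismProperty (ModuleCat.{u} R))
    (hSig : ∀ ⦃P Q : ModuleCat.{u} R⦄ (α : P ⟶ Q), Sig α →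
      Module.Finite R P ∧ Module.Projective R P ∧ Module.Finite R Q ∧
        Module.Projective R Q ∧ Function.Injective α)
    (hf : IsUniversalLocalization f Sig)
    (F : ModuleCat.{u} R ⥤ ModuleCat.{u} S) [F.Additive]
    (adj : F ⊣ ModuleCat.restrictScalars f)
    (M : ModuleCat.{u} R) (hM : Module.FinitePresentation R M)
    (hpd : ∃ (P Q : ModuleCat.{u} R) (i : P ⟶ Q),
      Module.Finite R P ∧ Module.Projective R P ∧ Module.Finite R Q ∧
        Module.Projective R Q ∧ Function.Injective i ∧ Nonempty (cokernel i ≅ M)) :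
    ((∀ (X : ModuleCat.{u} S) (g : M ⟶ (ModuleCat.restrictScalars f).obj X), g = 0) ∧
      (∀ (X : ModuleCat.{u} S),
        IsZero (((Ext ℤ (ModuleCat.{u} R) 1).obj (Opposite.op M)).obj
          ((ModuleCat.restrictScalars f).obj X)))) ↔
    (IsZero (F.obj M) ∧ IsZero ((F.leftDerived 1).obj M)) :=
  hom_ext_vanish_iff_tensor_tor_vanish_general f F adj M hpd
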